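/- For all positive integers n and l, the number of non-isomorphic super edge-magic labelings of K_{1,n} ∪ lK_1 is exactly (l + 1)(l + 2); precisely, the number of pairs (c, S), where c ∈ {1, ..., n + l + 1} and S ⊆ {1, ..., n + l + 1}, for which some super edge-magic labeling f of K_{1,n} ∪ lK_1 satisfies f(x) = c and f({y_1, ..., y_n}) = S, equals (l + 1)(l + 2). -/

import Mathlib

/-- `f` is an edge-magic labeling of the graph `G` with valence `k`:
`f` is a bijection from `V(G) ∪ E(G)` onto `{1, …, p + q}` and
`f u + f v + f uv = k` for every edge `uv`. -/
def IsEdgeMagic {V : Type*} [Fintype V] (G : SimpleGraph V)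
    (f : V ⊕ G.edgeSet → ℕ) (k : ℕ) : Prop :=
  Set.BijOn f Set.univ (Set.Icc 1 (Fintype.card V + G.edgeSet.ncard)) ∧
  ∀ u v, ∀ h : G.Adj u v,
    f (Sum.inl u) + f (Sum.inl v) + f (Sum.inr ⟨s(u, v), G.mem_edgeSet.mpr h⟩) = k

/-- `f` is a super edge-magic labeling of `G` with valence `k`: an edge-magic
labeling whose vertex labels are exactly `{1, …, p}`. -/
def IsSuperEdgeMagic {V : Type*} [Fintype V] (G : SimpleGraph V)
    (f : V ⊕ G.edgeSet → ℕ) (k : ℕ) : Prop :=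
  IsEdgeMagic G f k ∧ ∀ v, f (Sum.inl v) ∈ Set.Icc 1 (Fintype.card V)

/-- The graph `K_{1,n} ∪ lK_1`: the disjoint union of the star `K_{1,n}`
(with center `0` and leaves `1, …, n`) and `l` isolated vertices
(`n+1, …, n+l`), on `n + l + 1` vertices. -/
def starUnion (n l : ℕ) : SimpleGraph (Fin (n + l + 1)) where
  Adj u v := (u = 0 ∧ v ≠ 0 ∧ (v : ℕ) ≤ n) ∨ (v = 0 ∧ u ≠ 0 ∧ (u : ℕ) ≤ n)
  symm := ⟨fun u v h => h.symm⟩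
  loopless := ⟨fun v h => by rcases h with ⟨h1, h2, _⟩ | ⟨h1, h2, _⟩ <;> exact h2 h1⟩

/-! In a super edge-magic labeling of `K_{1,n} ∪ lK_1` the vertices carry the labels `1, …, p`
(`p = n + l + 1`), so the edges carry `p + 1, …, p + n`. Every edge joins the center, labelled `c`,
to a leaf, hence leaf label plus edge label is the constant `k - c`: the leaf labels are the
reflection of the edge labels, an interval `[a, a + n - 1] ⊆ [1, p]` avoiding `c`. Conversely every
such `a` and `c` occur: extend `c` and `a, …, a + n - 1` to a bijection of the vertices onto
`[1, p]` and label each edge by the valence minus the labels of its ends, which works because the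
edge sums `c + a, …, c + a + n - 1` are consecutive. There are `l + 2` positions for the interval
and then `l + 1` choices of `c`. -/

open Set Function

theorem range_eq_of_injective_of_ncard_le {α β : Type*} [Finite α] {f : α → β} {t : Set β}
    (hf : Injective f) (hft : ∀ x, f x ∈ t) (ht : t.ncard ≤ Nat.card α) (htf : t.Finite) :
    range f = t :=
  eq_of_subset_of_ncard_le (range_subset_iff.2 hft) (by rwa [ncard_range_of_injective hf]) htf

namespace IsSuperEdgeMagic

variable {V : Type*} [Fintype V] {G : SimpleGraph V} {f : V ⊕ G.edgeSet → ℕ} {k : ℕ}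

theorem injective (hf : IsSuperEdgeMagic G f k) : Injective f :=
  injOn_univ.1 hf.1.1.injOn

theorem range_inl (hf : IsSuperEdgeMagic G f k) :
    range (f ∘ Sum.inl) = Icc 1 (Fintype.card V) :=
  range_eq_of_injective_of_ncard_le (hf.injective.comp Sum.inl_injective) hf.2
    (by simp) (finite_Icc _ _)

theorem range_inr (hf : IsSuperEdgeMagic G f k) :
    range (f ∘ Sum.inr) = Icc (Fintype.card V + 1) (Fintype.card V + G.edgeSet.ncard) := by
  have hrange : range f = range (f ∘ Sum.inl) ∪ range (f ∘ Sum.inr) := by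
    rw [← Set.Sum.elim_range, Sum.elim_comp_inl_inr]
  have hdisj : range (f ∘ Sum.inl) ∩ range (f ∘ Sum.inr) ⊆ ∅ := by
    rintro _ ⟨⟨v, rfl⟩, ⟨e, he⟩⟩
    exact Sum.inr_ne_inl (hf.injective he)
  rw [← union_sdiff_cancel_left hdisj, ← hrange, ← image_univ, hf.1.1.image_eq, hf.range_inl]
  ext m
  simp only [mem_sdiff, mem_Icc]
  omega

end IsSuperEdgeMagic

def labelSum {V : Type*} (g : V → ℕ) : Sym2 V → ℕ :=
  Sym2.lift ⟨fun u v => g u + g v, fun _ _ => add_comm _ _⟩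

@[simp]
theorem labelSum_mk {V : Type*} (g : V → ℕ) (u v : V) : labelSum g s(u, v) = g u + g v := rfl

theorem isSuperEdgeMagic_of_labelSum {V : Type*} [Fintype V] {G : SimpleGraph V} {g : V → ℕ}
    (s : ℕ) (hg : Injective g) (hgV : ∀ v, g v ∈ Icc 1 (Fintype.card V))
    (hinj : InjOn (labelSum g) G.edgeSet)
    (hsum : ∀ e ∈ G.edgeSet, labelSum g e ∈ Ico s (s + G.edgeSet.ncard)) :
    IsSuperEdgeMagic G
      (Sum.elim g fun e => s + Fintype.card V + G.edgeSet.ncard - labelSum g e)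
      (s + Fintype.card V + G.edgeSet.ncard) := by
  set p := Fintype.card V
  set q := G.edgeSet.ncard
  set f : V ⊕ G.edgeSet → ℕ := Sum.elim g fun e => s + p + q - labelSum g e
  have hE : ∀ e : G.edgeSet, f (Sum.inr e) ∈ Icc (p + 1) (p + q) := fun e => by
    have := hsum e e.2
    simp only [f, Sum.elim_inr, mem_Icc, mem_Ico] at this ⊢
    omega
  have hinjE : Injective (f ∘ Sum.inr) := fun e₁ e₂ h => by
    have h₁ := hsum e₁ e₁.2
    have h₂ := hsum e₂ e₂.2
    simp only [f, comp_apply, Sum.elim_inr, mem_Ico] at h h₁ h₂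
    exact Subtype.ext (hinj e₁.2 e₂.2 (by omega))
  have hfinj : Injective f := hg.sumElim hinjE fun v e h => by
    have hv := (hgV v).2
    have he : p + 1 ≤ g v := h ▸ (hE e).1
    omega
  have hrange : range f = Icc 1 (p + q) := by
    refine range_eq_of_injective_of_ncard_le hfinj (fun x => ?_) ?_ (finite_Icc _ _)
    · rcases x with v | e
      · exact Icc_subset_Icc le_rfl (Nat.le_add_right _ _) (hgV v)
      · exact Icc_subset_Icc (Nat.le_add_left _ _) le_rfl (hE e)
    · simp [p, q, Nat.card_coe_set_eq]
  refine ⟨⟨?_, fun u v h => ?_⟩, hgV⟩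
  · rw [← hrange, ← image_univ]
    exact (injOn_univ.2 hfinj).bijOn_image
  · have := hsum _ (G.mem_edgeSet.2 h)
    simp only [f, Sum.elim_inl, Sum.elim_inr, labelSum_mk, mem_Ico] at this ⊢
    omega

section StarUnion

variable {n l : ℕ}

theorem starUnion_adj_zero {v : Fin (n + l + 1)} :
    (starUnion n l).Adj 0 v ↔ v ≠ 0 ∧ (v : ℕ) ≤ n := by
  simp [starUnion]

theorem mem_edgeSet_starUnion {e : Sym2 (Fin (n + l + 1))} :
    e ∈ (starUnion n l).edgeSet ↔ ∃ v : Fin (n + l + 1), v ≠ 0 ∧ (v : ℕ) ≤ n ∧ e = s(0, v) := by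
  induction e using Sym2.inductionOn with
  | hf u v =>
    constructor
    · rintro (⟨rfl, hv⟩ | ⟨rfl, hu⟩)
      · exact ⟨v, hv.1, hv.2, rfl⟩
      · exact ⟨u, hu.1, hu.2, Sym2.eq_swap⟩
    · rintro ⟨w, hw, hwn, h⟩
      rcases Sym2.eq_iff.1 h with ⟨rfl, rfl⟩ | ⟨rfl, rfl⟩
      · exact Or.inl ⟨rfl, hw, hwn⟩
      · exact Or.inr ⟨rfl, hw, hwn⟩

theorem ncard_edgeSet_starUnion : (starUnion n l).edgeSet.ncard = n := by
  have hedges : (starUnion n l).edgeSet =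
      (fun v => s(0, v)) '' {v : Fin (n + l + 1) | v ≠ 0 ∧ (v : ℕ) ≤ n} := by
    ext e
    simp only [mem_edgeSet_starUnion, mem_image, mem_ofPred_eq, and_assoc, eq_comm]
  have hleaves : Fin.val '' {v : Fin (n + l + 1) | v ≠ 0 ∧ (v : ℕ) ≤ n} = Icc 1 n := by
    ext m
    simp only [mem_image, mem_ofPred_eq, mem_Icc, ne_eq, Fin.ext_iff, Fin.val_zero]
    constructor
    · rintro ⟨v, ⟨hv, hvn⟩, rfl⟩
      omega
    · rintro ⟨hm, hmn⟩
      exact ⟨⟨m, by omega⟩, ⟨by simp only; omega, hmn⟩, rfl⟩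
  rw [hedges, ncard_image_of_injective _ fun _ _ => Sym2.congr_right.1,
    ← ncard_image_of_injective _ Fin.val_injective, hleaves, ncard_Icc_nat, Nat.add_sub_cancel]

abbrev starLeafLabels (f : Fin (n + l + 1) ⊕ (starUnion n l).edgeSet → ℕ) : Set ℕ :=
  {m | ∃ v : Fin (n + l + 1), v ≠ 0 ∧ (v : ℕ) ≤ n ∧ f (Sum.inl v) = m}

namespace IsSuperEdgeMagic

variable {f : Fin (n + l + 1) ⊕ (starUnion n l).edgeSet → ℕ} {k : ℕ}

theorem starUnion_leaf_label_iff (hf : IsSuperEdgeMagic (starUnion n l) f k) (m : ℕ) :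
    m ∈ starLeafLabels f ↔
      ∃ j ∈ Icc (n + l + 1 + 1) (n + l + 1 + n), f (Sum.inl 0) + m + j = k := by
  have hE := hf.range_inr
  rw [Fintype.card_fin, ncard_edgeSet_starUnion] at hE
  constructor
  · rintro ⟨v, hv, hvn, rfl⟩
    exact ⟨_, hE ▸ mem_range_self _, hf.1.2 0 v (starUnion_adj_zero.2 ⟨hv, hvn⟩)⟩
  · rintro ⟨j, hj, hk⟩
    obtain ⟨⟨e, he⟩, rfl⟩ := hE ▸ hj
    obtain ⟨w, hw, hwn, rfl⟩ := mem_edgeSet_starUnion.1 he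
    have hkw := hf.1.2 0 w (starUnion_adj_zero.2 ⟨hw, hwn⟩)
    exact ⟨w, hw, hwn, by simp only [comp_apply] at hk; omega⟩

theorem starUnion_center_label_not_mem (hf : IsSuperEdgeMagic (starUnion n l) f k) :
    f (Sum.inl 0) ∉ starLeafLabels f := by
  rintro ⟨v, hv, -, h⟩
  exact hv (Sum.inl_injective (hf.injective h))

theorem starUnion_leaf_labels_eq_Icc (hn : 1 ≤ n) (hf : IsSuperEdgeMagic (starUnion n l) f k) :
    ∃ a ∈ Icc 1 (l + 2), starLeafLabels f = Icc a (a + n - 1) := by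
  set c := f (Sum.inl 0)
  have hlabel := hf.starUnion_leaf_label_iff
  obtain ⟨j, ⟨hj₁, -⟩, hkj⟩ := (hlabel _).1 ⟨⟨1, by omega⟩, Fin.ne_of_val_ne one_ne_zero, hn, rfl⟩
  -- otherwise the edge label `k - c` would belong to a leaf labelled `0`
  have hk : c + (n + l + 1 + n) < k := by
    by_contra! h
    obtain ⟨v, -, -, hv⟩ := (hlabel 0).2 ⟨k - c, ⟨by omega, by omega⟩, by omega⟩
    exact Nat.one_le_iff_ne_zero.1 (hf.2 v).1 hv
  set a := k - c - (n + l + 1 + n)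
  have hL : starLeafLabels f = Icc a (a + n - 1) := by
    ext m
    rw [hlabel, mem_Icc]
    constructor
    · rintro ⟨j, ⟨hj₁, hj₂⟩, hm⟩
      omega
    · rintro ⟨hm₁, hm₂⟩
      exact ⟨k - c - m, ⟨by omega, by omega⟩, by omega⟩
  obtain ⟨v, -, -, hv⟩ := (hlabel (a + n - 1)).2 ⟨n + l + 1 + 1, ⟨le_rfl, by omega⟩, by omega⟩
  have hv_le := (hf.2 v).2
  rw [Fintype.card_fin, hv] at hv_le
  exact ⟨a, ⟨by omega, by omega⟩, hL⟩

end IsSuperEdgeMagic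

theorem exists_isSuperEdgeMagic_starUnion {a c : ℕ} (ha : a ∈ Icc 1 (l + 2))
    (hc : c ∈ Icc 1 (n + l + 1) \ Icc a (a + n - 1)) :
    ∃ f k, IsSuperEdgeMagic (starUnion n l) f k ∧ f (Sum.inl 0) = c ∧
      Icc a (a + n - 1) = starLeafLabels f := by
  simp only [mem_sdiff, mem_Icc] at ha hc
  obtain ⟨g, hg⟩ : ∃ g : Fin (n + l + 1) ≃ Finset.Icc 1 (n + l + 1),
      ∀ v ∈ {v : Fin (n + l + 1) | (v : ℕ) ≤ n},
        (g v : ℕ) = if (v : ℕ) = 0 then c else a + v - 1 := by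
    refine MapsTo.exists_equiv_extend_of_card_eq (by simp) (fun v hv => ?_) fun v hv w hw h => ?_
    · have := v.isLt
      simp only [mem_ofPred_eq] at hv
      rw [Finset.coe_Icc, mem_Icc]
      split_ifs <;> omega
    · simp only [mem_ofPred_eq] at hv hw
      rw [Fin.ext_iff]
      split_ifs at h <;> omega
  have hg0 : (g 0 : ℕ) = c := by simpa using hg 0 (Nat.zero_le _)
  have hleaf : ∀ v : Fin (n + l + 1), v ≠ 0 → (v : ℕ) ≤ n → (g v : ℕ) = a + v - 1 :=
    fun v hv hvn => by simpa [Fin.val_ne_zero_iff.2 hv] using hg v hvn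
  refine ⟨_, _, isSuperEdgeMagic_of_labelSum (g := fun v => (g v : ℕ)) (c + a)
    (Subtype.val_injective.comp g.injective)
    (fun v => by rw [Fintype.card_fin, ← Finset.coe_Icc]; exact (g v).2) ?_ ?_, hg0, ?_⟩
  · rintro _ he₁ _ he₂ h
    obtain ⟨w₁, hw₁, hw₁n, rfl⟩ := mem_edgeSet_starUnion.1 he₁
    obtain ⟨w₂, hw₂, hw₂n, rfl⟩ := mem_edgeSet_starUnion.1 he₂
    simp only [labelSum_mk, hg0, hleaf _ hw₁ hw₁n, hleaf _ hw₂ hw₂n] at h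
    have := Fin.val_ne_zero_iff.2 hw₁
    have := Fin.val_ne_zero_iff.2 hw₂
    rw [Sym2.congr_right, Fin.ext_iff]
    omega
  · rintro _ he
    obtain ⟨w, hw, hwn, rfl⟩ := mem_edgeSet_starUnion.1 he
    have := Fin.val_ne_zero_iff.2 hw
    rw [labelSum_mk, hg0, hleaf _ hw hwn, ncard_edgeSet_starUnion, mem_Ico]
    omega
  · ext m
    simp only [mem_Icc, mem_ofPred_eq, Sum.elim_inl]
    constructor
    · rintro ⟨hm₁, hm₂⟩
      have hv : (⟨m + 1 - a, by omega⟩ : Fin (n + l + 1)) ≠ 0 := Fin.ne_of_val_ne (by simp; omega)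
      exact ⟨_, hv, by simp only; omega, by rw [hleaf _ hv (by simp only; omega)]; simp only; omega⟩
    · rintro ⟨v, hv, hvn, rfl⟩
      have := Fin.val_ne_zero_iff.2 hv
      rw [hleaf v hv hvn]
      omega

theorem exists_isSuperEdgeMagic_starUnion_iff (hn : 1 ≤ n) {c : ℕ} {S : Set ℕ} :
    (∃ f k, IsSuperEdgeMagic (starUnion n l) f k ∧ f (Sum.inl 0) = c ∧ S = starLeafLabels f) ↔
      ∃ a ∈ Icc 1 (l + 2), S = Icc a (a + n - 1) ∧ c ∈ Icc 1 (n + l + 1) \ S := by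
  constructor
  · rintro ⟨f, k, hf, rfl, rfl⟩
    obtain ⟨a, ha, hL⟩ := hf.starUnion_leaf_labels_eq_Icc hn
    refine ⟨a, ha, hL, ?_, hf.starUnion_center_label_not_mem⟩
    simpa using hf.2 0
  · rintro ⟨a, ha, rfl, hc⟩
    exact exists_isSuperEdgeMagic_starUnion ha hc

end StarUnion

theorem ncard_center_interval_pairs (n l : ℕ) (hn : 1 ≤ n) :
    {pr : ℕ × Set ℕ | ∃ a ∈ Icc 1 (l + 2),
      pr.2 = Icc a (a + n - 1) ∧ pr.1 ∈ Icc 1 (n + l + 1) \ pr.2}.ncard = (l + 1) * (l + 2) := by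
  set D : Finset (Σ _ : ℕ, ℕ) := (Finset.Icc 1 (l + 2)).sigma fun a =>
    Finset.Icc 1 (n + l + 1) \ Finset.Icc a (a + n - 1)
  set F : (Σ _ : ℕ, ℕ) → ℕ × Set ℕ := fun x => (x.2, Icc x.1 (x.1 + n - 1))
  have hset : {pr : ℕ × Set ℕ | ∃ a ∈ Icc 1 (l + 2),
      pr.2 = Icc a (a + n - 1) ∧ pr.1 ∈ Icc 1 (n + l + 1) \ pr.2} = F '' D := by
    ext ⟨c, S⟩
    simp only [mem_ofPred_eq, mem_image, Finset.mem_coe, D, Finset.mem_sigma, Finset.mem_sdiff,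
      Finset.mem_Icc, mem_sdiff, mem_Icc, F, Prod.mk.injEq]
    constructor
    · rintro ⟨a, ha, rfl, hc⟩
      exact ⟨⟨a, c⟩, ⟨ha, hc⟩, rfl, rfl⟩
    · rintro ⟨⟨a, c⟩, ⟨ha, hc⟩, rfl, rfl⟩
      exact ⟨a, ha, rfl, hc⟩
  have hF : Injective F := by
    rintro ⟨a, c⟩ ⟨a', c'⟩ h
    simp only [F, Prod.mk.injEq] at h
    obtain ⟨rfl, h⟩ := h
    obtain ⟨rfl, -⟩ := (Icc_eq_Icc_iff (by omega)).1 h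
    rfl
  have hfiber : ∀ a ∈ Finset.Icc 1 (l + 2),
      (Finset.Icc 1 (n + l + 1) \ Finset.Icc a (a + n - 1)).card = l + 1 := by
    intro a ha
    rw [Finset.mem_Icc] at ha
    rw [Finset.card_sdiff_of_subset (Finset.Icc_subset_Icc ha.1 (by omega)), Nat.card_Icc,
      Nat.card_Icc]
    omega
  rw [hset, ncard_image_of_injective _ hF, ncard_coe_finset, Finset.card_sigma,
    Finset.sum_const_nat hfiber, Nat.card_Icc, Nat.add_sub_cancel, mul_comm]

theorem stmt_10_general (n l : ℕ) (hn : 1 ≤ n) :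
    {pr : ℕ × Set ℕ | pr.1 ∈ Set.Icc 1 (n + l + 1) ∧ pr.2 ⊆ Set.Icc 1 (n + l + 1) ∧
      ∃ f k, IsSuperEdgeMagic (starUnion n l) f k ∧ f (Sum.inl 0) = pr.1 ∧
        pr.2 = {m | ∃ v : Fin (n + l + 1), v ≠ 0 ∧ (v : ℕ) ≤ n ∧
          f (Sum.inl v) = m}}.ncard = (l + 1) * (l + 2) := by
  rw [← ncard_center_interval_pairs n l hn]
  congr 1
  ext ⟨c, S⟩
  simp only [mem_ofPred_eq, exists_isSuperEdgeMagic_starUnion_iff hn]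
  constructor
  · exact fun h => h.2.2
  · rintro ⟨a, ha, rfl, hc⟩
    exact ⟨hc.1, Icc_subset_Icc ha.1 (by grind), a, ha, rfl, hc⟩

/-- For all positive integers `n` and `l`, the number of non-isomorphic super
edge-magic labelings of `K_{1,n} ∪ lK_1` is exactly `(l + 1)(l + 2)`:
the number of pairs `(c, S)` with `c ∈ {1, …, n+l+1}` and
`S ⊆ {1, …, n+l+1}` for which some super edge-magic labeling `f` satisfies
`f x = c` (on the center `x`) and `f({y_1, …, y_n}) = S` (on the leaves)
equals `(l + 1)(l + 2)`. -/
theorem stmt_10 (n l : ℕ) (hn : 1 ≤ n) (hl : 1 ≤ l) :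
    {pr : ℕ × Set ℕ | pr.1 ∈ Set.Icc 1 (n + l + 1) ∧ pr.2 ⊆ Set.Icc 1 (n + l + 1) ∧
      ∃ f k, IsSuperEdgeMagic (starUnion n l) f k ∧ f (Sum.inl 0) = pr.1 ∧
        pr.2 = {m | ∃ v : Fin (n + l + 1), v ≠ 0 ∧ (v : ℕ) ≤ n ∧
          f (Sum.inl v) = m}}.ncard = (l + 1) * (l + 2) :=
  stmt_10_general n l hn
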